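/- arXiv:2202.05531 — 4 statements merged into one kernel-verified Lean document; each statement's English description precedes it below -/
import Mathlib

section
/- Let X be a Gaussian random variable with law N(μ, σ²) (μ ∈ ℝ, σ > 0) and let λ ∈ ℝ with λ ≠ 0. Then the exponentially tilted mean squared error about μ satisfies E[(X - μ)² e^{-λX}] / E[e^{-λX}] = λ²σ⁴ + σ², and in particular it is strictly greater than the untilted mean squared error E[(X - μ)²] = σ². -/
open MeasureTheory ProbabilityTheory Real Set
open scoped NNReal ENNReal

lemma sq_mul_exp_Ioi {b : ℝ} (hb : 0 < b) :
    ∫ x in Ioi (0:ℝ), 2 * (x ^ 2 * rexp (-b * x ^ 2)) = (1/b) ^ ((3:ℝ)/2) * Real.Gamma (3/2) := by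
  rw [← integral_rpow_mul_exp_neg_mul_Ioi (by norm_num : (0:ℝ) < 3/2) hb,
    ← integral_comp_rpow_Ioi_of_pos (g := fun t => t ^ ((3:ℝ)/2 - 1) * rexp (-(b * t))) zero_lt_two]
  refine setIntegral_congr_fun measurableSet_Ioi fun x hx => ?_
  have hx0 : (0:ℝ) < x := hx
  have h2 : x ^ (2:ℝ) = x ^ 2 := by rw [← rpow_natCast x 2]; norm_num
  have h1 : (x ^ 2 : ℝ) ^ ((3:ℝ)/2 - 1) = x := by
    rw [← h2, ← rpow_mul hx0.le]; norm_num
  have h3 : x ^ ((2:ℝ) - 1) = x := by norm_num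
  simp only [smul_eq_mul, h1, h2, h3]
  ring

lemma Gamma_three_halves : Real.Gamma (3/2) = √π / 2 := by
  have := Real.Gamma_add_one (by norm_num : (1/2 : ℝ) ≠ 0)
  rw [show (1/2 : ℝ) + 1 = 3/2 by norm_num] at this
  rw [this, Real.Gamma_one_half_eq]; ring

lemma integral_sq_mul_exp {b : ℝ} (hb : 0 < b) :
    ∫ x : ℝ, x ^ 2 * rexp (-b * x ^ 2) = Real.sqrt (π / b) / (2 * b) := by
  have habs : ∀ x : ℝ, |x| ^ 2 * rexp (-b * |x| ^ 2) = x ^ 2 * rexp (-b * x ^ 2) := by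
    intro x; rw [sq_abs]
  calc ∫ x : ℝ, x ^ 2 * rexp (-b * x ^ 2)
      = ∫ x : ℝ, (fun t => t ^ 2 * rexp (-b * t ^ 2)) |x| := by
        simp only [habs]
    _ = 2 * ∫ x in Ioi (0:ℝ), (fun t => t ^ 2 * rexp (-b * t ^ 2)) x := integral_comp_abs (f := fun t => t ^ 2 * rexp (-b * t ^ 2))
    _ = 2 * ∫ x in Ioi (0:ℝ), x ^ 2 * rexp (-b * x ^ 2) := rfl
    _ = ∫ x in Ioi (0:ℝ), 2 * (x ^ 2 * rexp (-b * x ^ 2)) := by rw [← integral_const_mul]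
    _ = (1/b) ^ ((3:ℝ)/2) * Real.Gamma (3/2) := sq_mul_exp_Ioi hb
    _ = Real.sqrt (π / b) / (2 * b) := by
        rw [Gamma_three_halves]
        have h : √(π/b) = √π * (1/b) ^ ((1:ℝ)/2) := by
          rw [div_eq_mul_one_div, Real.sqrt_mul pi_pos.le, Real.sqrt_eq_rpow, Real.sqrt_eq_rpow]
        rw [show ((3:ℝ)/2) = (1:ℝ) + 1/2 by norm_num, rpow_add (by positivity), rpow_one, h]
        field_simp


section helpers
variable {v : ℝ≥0}

lemma my_integral_gaussianReal (μ : ℝ) (hv : v ≠ 0) (f : ℝ → ℝ) :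
    ∫ x, f x ∂(gaussianReal μ v) = ∫ x, gaussianPDFReal μ v x * f x := by
  rw [gaussianReal_of_var_ne_zero _ hv]
  have h : gaussianPDF μ v = fun x => ((gaussianPDFReal μ v x).toNNReal : ℝ≥0∞) := rfl
  rw [h, integral_withDensity_eq_integral_smul
    ((measurable_gaussianPDFReal μ v).real_toNNReal) f]
  refine integral_congr_ae (Filter.Eventually.of_forall fun x => ?_)
  simp [NNReal.smul_def, Real.coe_toNNReal _ (gaussianPDFReal_nonneg μ v x)]

lemma pdf0_eq (hv0 : 0 < (v:ℝ)) (x : ℝ) :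
    gaussianPDFReal 0 v x = (√(2 * π * v))⁻¹ * rexp (-(2*(v:ℝ))⁻¹ * x ^ 2) := by
  rw [gaussianPDFReal]
  congr 1
  rw [sub_zero]
  field_simp

lemma integrable_sq_pdf0 (hv0 : 0 < (v:ℝ)) :
    Integrable fun x : ℝ => x ^ 2 * gaussianPDFReal 0 v x := by
  have hb : (0:ℝ) < (2*(v:ℝ))⁻¹ := by positivity
  have h := (integrable_rpow_mul_exp_neg_mul_sq hb (by norm_num : (-1:ℝ) < 2)).const_mul
    ((√(2 * π * v))⁻¹)
  refine h.congr (Filter.Eventually.of_forall fun x => ?_)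
  simp only [pdf0_eq hv0]
  rw [show x ^ (2:ℝ) = x ^ 2 by rw [← Real.rpow_natCast x 2]; norm_num]
  ring
end helpers

section helpers2
variable {v : ℝ≥0}

lemma integrable_id_pdf0 (hv0 : 0 < (v:ℝ)) :
    Integrable fun x : ℝ => x * gaussianPDFReal 0 v x := by
  have hb : (0:ℝ) < (2*(v:ℝ))⁻¹ := by positivity
  have h := (integrable_mul_exp_neg_mul_sq hb).const_mul ((√(2 * π * v))⁻¹)
  refine h.congr (Filter.Eventually.of_forall fun x => ?_)
  simp only [pdf0_eq hv0]
  ring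

lemma integral_id_pdf0 (hv0 : 0 < (v:ℝ)) :
    ∫ x : ℝ, x * gaussianPDFReal 0 v x = 0 := by
  have hodd : ∀ x : ℝ, (-x) * gaussianPDFReal 0 v (-x) = -(x * gaussianPDFReal 0 v x) := by
    intro x
    simp only [pdf0_eq hv0, neg_sq]
    ring
  have h := integral_neg_eq_self (fun x : ℝ => x * gaussianPDFReal 0 v x) volume
  simp only [hodd] at h
  rw [integral_neg] at h
  linarith

lemma integral_sq_pdf0 (hv0 : 0 < (v:ℝ)) :
    ∫ x : ℝ, x ^ 2 * gaussianPDFReal 0 v x = v := by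
  have hb : (0:ℝ) < (2*(v:ℝ))⁻¹ := by positivity
  have key : ∫ x : ℝ, x ^ 2 * gaussianPDFReal 0 v x
      = (√(2 * π * v))⁻¹ * ∫ x : ℝ, x ^ 2 * rexp (-(2*(v:ℝ))⁻¹ * x ^ 2) := by
    rw [← integral_const_mul]
    refine integral_congr_ae (Filter.Eventually.of_forall fun x => ?_)
    simp only [pdf0_eq hv0]; ring
  rw [key, integral_sq_mul_exp hb]
  have h1 : π / (2*(v:ℝ))⁻¹ = 2 * π * v := by field_simp
  rw [h1]
  have h2 : √(2 * π * (v:ℝ)) ≠ 0 := by positivity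
  field_simp

lemma tilt_pdf0 (hv0 : 0 < (v:ℝ)) (lam x : ℝ) :
    rexp (-(lam * x)) * gaussianPDFReal 0 v x
      = rexp (lam ^ 2 * v / 2) * gaussianPDFReal (-(lam * v)) v x := by
  simp only [gaussianPDFReal, sub_zero, sub_neg_eq_add]
  rw [show rexp (-(lam*x)) * ((√(2*π*(v:ℝ)))⁻¹ * rexp (-x^2 / (2*v)))
      = (√(2*π*(v:ℝ)))⁻¹ * (rexp (-(lam*x)) * rexp (-x^2 / (2*v))) by ring,
    show rexp (lam^2*v/2) * ((√(2*π*(v:ℝ)))⁻¹ * rexp (-(x + lam*v)^2 / (2*v)))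
      = (√(2*π*(v:ℝ)))⁻¹ * (rexp (lam^2*v/2) * rexp (-(x + lam*v)^2 / (2*v))) by ring,
    ← Real.exp_add, ← Real.exp_add]
  congr 1
  field_simp
  ring

lemma integral_sq_pdf_shift (hv0 : 0 < (v:ℝ)) (m : ℝ) :
    ∫ x : ℝ, x ^ 2 * gaussianPDFReal m v x = v + m ^ 2 := by
  have hv : v ≠ 0 := by
    intro h; rw [h] at hv0; simp at hv0
  have h := integral_add_right_eq_self (μ := volume) (fun x : ℝ => x ^ 2 * gaussianPDFReal m v x) m
  rw [← h]
  have hpt : ∀ x : ℝ, (x + m) ^ 2 * gaussianPDFReal m v (x + m)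
      = x ^ 2 * gaussianPDFReal 0 v x + ((2*m) * (x * gaussianPDFReal 0 v x)
        + m ^ 2 * gaussianPDFReal 0 v x) := by
    intro x
    rw [gaussianPDFReal_add, sub_self]
    ring
  simp only [hpt]
  have i1 : Integrable (fun x : ℝ => (2*m) * (x * gaussianPDFReal 0 v x)) :=
    (integrable_id_pdf0 hv0).const_mul _
  have i2 : Integrable (fun x : ℝ => m ^ 2 * gaussianPDFReal 0 v x) :=
    (integrable_gaussianPDFReal 0 v).const_mul _
  have e1 := integral_add (μ := volume) (integrable_sq_pdf0 hv0) (i1.add i2)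
  have e2 := integral_add (μ := volume) i1 i2
  simp only [Pi.add_apply] at e1 e2
  rw [e1, e2, integral_const_mul, integral_const_mul, integral_id_pdf0 hv0, integral_sq_pdf0 hv0,
    integral_gaussianPDFReal_eq_one 0 hv]
  ring
end helpers2

section main
variable {v : ℝ≥0}

lemma tilted_norm (hv0 : 0 < (v:ℝ)) (lam : ℝ) :
    ∫ x : ℝ, rexp (-(lam * x)) * gaussianPDFReal 0 v x = rexp (lam ^ 2 * v / 2) := by
  have hv : v ≠ 0 := by intro h; rw [h] at hv0; simp at hv0
  simp only [tilt_pdf0 hv0 lam]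
  rw [integral_const_mul, integral_gaussianPDFReal_eq_one _ hv, mul_one]

lemma tilted_sq (hv0 : 0 < (v:ℝ)) (lam : ℝ) :
    ∫ x : ℝ, x ^ 2 * (rexp (-(lam * x)) * gaussianPDFReal 0 v x)
      = rexp (lam ^ 2 * v / 2) * ((v:ℝ) + (lam * v) ^ 2) := by
  have hpt : ∀ x : ℝ, x ^ 2 * (rexp (-(lam * x)) * gaussianPDFReal 0 v x)
      = rexp (lam ^ 2 * v / 2) * (x ^ 2 * gaussianPDFReal (-(lam * v)) v x) := by
    intro x; rw [tilt_pdf0 hv0 lam]; ring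
  simp only [hpt]
  rw [integral_const_mul, integral_sq_pdf_shift hv0, neg_pow]
  ring_nf


/-- For `X ~ N(μ, σ²)` and `λ ≠ 0`:
`E[(X-μ)²e^{-λX}]/E[e^{-λX}] = λ²σ⁴ + σ²`, the untilted MSE is `E[(X-μ)²] = σ²`,
and the tilted MSE is strictly larger than the untilted one. -/
theorem gaussian_tilted_mse_gt_untilted (μ σ lam : ℝ) (hσ : 0 < σ) (hlam : lam ≠ 0) :
    (∫ x, (x - μ) ^ 2 * Real.exp (-(lam * x)) ∂(gaussianReal μ ⟨σ ^ 2, sq_nonneg σ⟩)) /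
        (∫ x, Real.exp (-(lam * x)) ∂(gaussianReal μ ⟨σ ^ 2, sq_nonneg σ⟩)) =
      lam ^ 2 * σ ^ 4 + σ ^ 2 ∧
    (∫ x, (x - μ) ^ 2 ∂(gaussianReal μ ⟨σ ^ 2, sq_nonneg σ⟩)) = σ ^ 2 ∧
    (∫ x, (x - μ) ^ 2 ∂(gaussianReal μ ⟨σ ^ 2, sq_nonneg σ⟩)) <
      (∫ x, (x - μ) ^ 2 * Real.exp (-(lam * x)) ∂(gaussianReal μ ⟨σ ^ 2, sq_nonneg σ⟩)) /
        (∫ x, Real.exp (-(lam * x)) ∂(gaussianReal μ ⟨σ ^ 2, sq_nonneg σ⟩)) := by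
  set v : ℝ≥0 := ⟨σ ^ 2, sq_nonneg σ⟩ with hvdef
  have hv0 : 0 < (v:ℝ) := by show (0:ℝ) < σ ^ 2; positivity
  have hvσ : (v:ℝ) = σ ^ 2 := rfl
  have hv : v ≠ 0 := by intro h; rw [h] at hv0; simp at hv0
  -- untilted
  have hC : (∫ x, (x - μ) ^ 2 ∂(gaussianReal μ v)) = σ ^ 2 := by
    rw [my_integral_gaussianReal μ hv]
    have h := integral_add_right_eq_self (μ := volume)
      (fun x : ℝ => gaussianPDFReal μ v x * (x - μ) ^ 2) μ
    rw [← h]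
    have hpt : ∀ x : ℝ, gaussianPDFReal μ v (x + μ) * (x + μ - μ) ^ 2
        = x ^ 2 * gaussianPDFReal 0 v x := by
      intro x; rw [gaussianPDFReal_add, sub_self, add_sub_cancel_right]; ring
    simp only [hpt]
    rw [integral_sq_pdf0 hv0, hvσ]
  -- tilted normalization
  have hA : (∫ x, Real.exp (-(lam * x)) ∂(gaussianReal μ v))
      = rexp (lam ^ 2 * v / 2 + -(lam * μ)) := by
    rw [my_integral_gaussianReal μ hv]
    have h := integral_add_right_eq_self (μ := volume)
      (fun x : ℝ => gaussianPDFReal μ v x * rexp (-(lam * x))) μ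
    rw [← h]
    have hpt : ∀ x : ℝ, gaussianPDFReal μ v (x + μ) * rexp (-(lam * (x + μ)))
        = rexp (-(lam * μ)) * (rexp (-(lam * x)) * gaussianPDFReal 0 v x) := by
      intro x
      rw [gaussianPDFReal_add, sub_self, show -(lam * (x + μ)) = -(lam * x) + -(lam * μ) by ring,
        Real.exp_add]
      ring
    simp only [hpt]
    rw [integral_const_mul, tilted_norm hv0, ← Real.exp_add]
    ring_nf
  -- tilted second moment
  have hB : (∫ x, (x - μ) ^ 2 * Real.exp (-(lam * x)) ∂(gaussianReal μ v))
      = rexp (lam ^ 2 * v / 2 + -(lam * μ)) * ((v:ℝ) + (lam * v) ^ 2) := by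
    rw [my_integral_gaussianReal μ hv]
    have h := integral_add_right_eq_self (μ := volume)
      (fun x : ℝ => gaussianPDFReal μ v x * ((x - μ) ^ 2 * rexp (-(lam * x)))) μ
    rw [← h]
    have hpt : ∀ x : ℝ, gaussianPDFReal μ v (x + μ) * ((x + μ - μ) ^ 2 * rexp (-(lam * (x + μ))))
        = rexp (-(lam * μ)) * (x ^ 2 * (rexp (-(lam * x)) * gaussianPDFReal 0 v x)) := by
      intro x
      rw [gaussianPDFReal_add, sub_self, add_sub_cancel_right,
        show -(lam * (x + μ)) = -(lam * x) + -(lam * μ) by ring, Real.exp_add]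
      ring
    simp only [hpt]
    rw [integral_const_mul, tilted_sq hv0, ← mul_assoc, ← Real.exp_add]
    ring_nf
  have hApos : (0:ℝ) < rexp (lam ^ 2 * v / 2 + -(lam * μ)) := Real.exp_pos _
  have hratio : (∫ x, (x - μ) ^ 2 * Real.exp (-(lam * x)) ∂(gaussianReal μ v)) /
      (∫ x, Real.exp (-(lam * x)) ∂(gaussianReal μ v)) = lam ^ 2 * σ ^ 4 + σ ^ 2 := by
    rw [hA, hB, mul_div_cancel_left₀ _ (ne_of_gt hApos), hvσ]
    ring
  refine ⟨hratio, hC, ?_⟩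
  rw [hratio, hC]
  have : 0 < lam ^ 2 * σ ^ 4 := by positivity
  linarith
end main
end

section
/- Let Z be a standard Gaussian random variable, μ ∈ ℝ, σ > 0, λ ∈ ℝ, and let X = μ + σ|Z|. Define C = σ · φ(σλ) / P(Z ≥ σλ), where φ(a) = exp(-a²/2)/√(2π) is the standard Gaussian density. Then E[X · exp(-λX)] / E[exp(-λX)] = μ - σ²λ + C. -/
open MeasureTheory ProbabilityTheory Real

open MeasureTheory ProbabilityTheory Real Set
open scoped ENNReal NNReal

noncomputable def hnP (t : ℝ) : ℝ := Real.exp (-t ^ 2 / 2)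

lemma hnP_eq : hnP = fun x : ℝ => Real.exp (-(1/2 : ℝ) * x ^ 2) := by
  ext x; simp only [hnP]; ring_nf

lemma integrable_hnP : Integrable hnP := by
  rw [hnP_eq]; exact integrable_exp_neg_mul_sq (by norm_num)

lemma integrable_mul_hnP : Integrable (fun x => x * hnP x) := by
  simp only [hnP_eq]; exact integrable_mul_exp_neg_mul_sq (by norm_num)

lemma hn_translate (a : ℝ) (g : ℝ → ℝ) :
    ∫ u in Ioi a, g u = ∫ z in Ioi (0:ℝ), g (z + a) := by
  rw [show Ioi a = (fun x => x + a) '' Ioi 0 by rw [image_add_const_Ioi, zero_add]]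
  exact (measurePreserving_add_right volume a).setIntegral_image_emb
    (measurableEmbedding_addRight a) g _

lemma hn_moment1 (a : ℝ) : ∫ u in Ioi a, u * hnP u = hnP a := by
  have := integral_Ioi_of_hasDerivAt_of_tendsto (f := fun u => -hnP u)
    (f' := fun u => u * hnP u) (a := a) (m := 0) ?_ ?_ ?_ ?_
  · rw [this]; simp
  · exact (Continuous.continuousWithinAt (by unfold hnP; continuity))
  · intro x hx
    have : HasDerivAt (fun u : ℝ => -Real.exp (-u ^ 2 / 2)) (x * Real.exp (-x^2/2)) x := by
      have h1 : HasDerivAt (fun u : ℝ => -u ^ 2 / 2) (-x) x := by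
        have := ((hasDerivAt_pow 2 x).neg).div_const 2
        exact this.congr_deriv (by push_cast; ring)
      have := (h1.exp).neg
      exact this.congr_deriv (by ring)
    simpa [hnP] using this
  · exact integrable_mul_hnP.integrableOn
  · have h2 : Filter.Tendsto (fun u : ℝ => -u ^ 2 / 2) Filter.atTop Filter.atBot := by
      apply Filter.Tendsto.atBot_div_const (by norm_num : (0:ℝ) < 2)
      exact Filter.tendsto_neg_atBot_iff.mpr (Filter.tendsto_pow_atTop (by norm_num))
    have : Filter.Tendsto (fun u : ℝ => Real.exp (-u ^ 2 / 2)) Filter.atTop (nhds 0) :=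
      Real.tendsto_exp_atBot.comp h2
    simpa [hnP] using this.neg

lemma hn_S_pos (a : ℝ) : 0 < ∫ u in Ioi a, hnP u := by
  rw [setIntegral_pos_iff_support_of_nonneg_ae]
  · have : Function.support hnP = univ := by
      ext x; simp [hnP, Real.exp_ne_zero]
    rw [this, univ_inter]; simp
  · exact Filter.Eventually.of_forall (fun x => (Real.exp_pos _).le)
  · exact integrable_hnP.integrableOn

lemma hn_tilt (a z : ℝ) : Real.exp (-(a * z)) * hnP z = Real.exp (a ^ 2 / 2) * hnP (z + a) := by
  simp only [hnP, ← Real.exp_add]; ring_nf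

lemma hn_integrableOn_tilt (a : ℝ) :
    IntegrableOn (fun z => Real.exp (-(a * z)) * hnP z) (Ioi 0) := by
  simp only [hn_tilt]
  exact (((integrable_hnP.comp_add_right a)).const_mul _).integrableOn

lemma hn_integrableOn_mul_tilt (a : ℝ) :
    IntegrableOn (fun z => z * (Real.exp (-(a * z)) * hnP z)) (Ioi 0) := by
  have key : ∀ z : ℝ, z * (Real.exp (-(a * z)) * hnP z)
      = Real.exp (a ^ 2 / 2) * ((z + a) * hnP (z + a))
        - Real.exp (a ^ 2 / 2) * a * hnP (z + a) := by
    intro z; rw [hn_tilt]; ring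
  simp only [key]
  exact (((integrable_mul_hnP.comp_add_right a).const_mul _).sub
    ((integrable_hnP.comp_add_right a).const_mul _)).integrableOn

lemma hn_A (a : ℝ) : ∫ z in Ioi (0:ℝ), Real.exp (-(a * z)) * hnP z
    = Real.exp (a ^ 2 / 2) * ∫ u in Ioi a, hnP u := by
  simp only [hn_tilt]
  rw [integral_const_mul, hn_translate a hnP]

lemma hn_B (a : ℝ) : ∫ z in Ioi (0:ℝ), z * (Real.exp (-(a * z)) * hnP z)
    = Real.exp (a ^ 2 / 2) * (hnP a - a * ∫ u in Ioi a, hnP u) := by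
  have key : ∀ z : ℝ, z * (Real.exp (-(a * z)) * hnP z)
      = Real.exp (a ^ 2 / 2) * ((z + a) * hnP (z + a))
        - Real.exp (a ^ 2 / 2) * a * hnP (z + a) := by
    intro z; rw [hn_tilt]; ring
  simp only [key]
  rw [integral_sub (((integrable_mul_hnP.comp_add_right a).const_mul _).integrableOn)
      (((integrable_hnP.comp_add_right a).const_mul _).integrableOn),
    integral_const_mul, integral_const_mul,
    ← hn_translate a (fun u => u * hnP u), ← hn_translate a hnP, hn_moment1]
  ring

lemma hn_pdf_eq (x : ℝ) : gaussianPDFReal 0 1 x = (Real.sqrt (2 * π))⁻¹ * hnP x := by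
  simp only [gaussianPDFReal, hnP, NNReal.coe_one, mul_one, sub_zero]

lemma hn_gauss_integral (g : ℝ → ℝ) :
    ∫ z, g z ∂(gaussianReal 0 1) = ∫ z, g z * gaussianPDFReal 0 1 z := by
  rw [gaussianReal_of_var_ne_zero _ one_ne_zero]
  have h : gaussianPDF 0 1 = fun x => ((gaussianPDFReal 0 1 x).toNNReal : ℝ≥0∞) := rfl
  rw [h, integral_withDensity_eq_integral_smul ((measurable_gaussianPDFReal 0 1).real_toNNReal) g]
  congr 1; ext z
  rw [NNReal.smul_def, smul_eq_mul, Real.coe_toNNReal _ (gaussianPDFReal_nonneg _ _ _), mul_comm]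

lemma hn_measure_toReal (a : ℝ) :
    ((gaussianReal 0 1) {z : ℝ | a ≤ z}).toReal
      = (Real.sqrt (2 * π))⁻¹ * ∫ u in Ioi a, hnP u := by
  rw [show {z : ℝ | a ≤ z} = Ici a from rfl, gaussianReal_apply_eq_integral 0 one_ne_zero,
    ENNReal.toReal_ofReal (integral_nonneg fun x => gaussianPDFReal_nonneg _ _ _),
    integral_Ici_eq_integral_Ioi]
  simp only [hn_pdf_eq]
  rw [integral_const_mul]

/-- For `Z ~ N(0,1)`, `σ > 0`, `X = μ + σ|Z|`, and
`C = σ·φ(σλ)/P(Z ≥ σλ)` with `φ(a) = exp(-a²/2)/√(2π)`: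
`E[X·exp(-λX)] / E[exp(-λX)] = μ - σ²λ + C`. -/
theorem halfNormal_tilted_first_moment (μ σ lam C : ℝ) (hσ : 0 < σ)
    (hC : C = σ * (Real.exp (-(σ * lam) ^ 2 / 2) / Real.sqrt (2 * π)) /
      ((gaussianReal 0 1) {z : ℝ | σ * lam ≤ z}).toReal) :
    (∫ z, (μ + σ * |z|) * Real.exp (-(lam * (μ + σ * |z|))) ∂(gaussianReal 0 1)) /
      (∫ z, Real.exp (-(lam * (μ + σ * |z|))) ∂(gaussianReal 0 1)) =
      μ - σ ^ 2 * lam + C := by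
  set a : ℝ := σ * lam with ha
  set S : ℝ := ∫ u in Ioi a, hnP u with hSdef
  have hSpos : 0 < S := hn_S_pos a
  have hsq : 0 < Real.sqrt (2 * π) := Real.sqrt_pos.mpr (by positivity)
  set c : ℝ := Real.exp (-(lam * μ)) * (Real.sqrt (2 * π))⁻¹ with hcdef
  have hcpos : 0 < c := by positivity
  have habs : ∀ z : ℝ, hnP z = hnP |z| := by intro z; simp [hnP, sq_abs]
  have hsplit : ∀ t : ℝ, Real.exp (-(lam * (μ + σ * t))) = Real.exp (-(lam * μ)) * Real.exp (-(a * t)) := by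
    intro t; rw [← Real.exp_add]; congr 1; rw [ha]; ring
  -- Denominator
  have hden : (∫ z, Real.exp (-(lam * (μ + σ * |z|))) ∂(gaussianReal 0 1))
      = 2 * (c * (Real.exp (a ^ 2 / 2) * S)) := by
    rw [hn_gauss_integral]
    have h1 : ∀ z : ℝ, Real.exp (-(lam * (μ + σ * |z|))) * gaussianPDFReal 0 1 z
        = c * (Real.exp (-(a * |z|)) * hnP |z|) := by
      intro z; rw [hn_pdf_eq, habs z, hsplit, hcdef]; ring
    simp only [h1]
    rw [integral_comp_abs (f := fun t => c * (Real.exp (-(a * t)) * hnP t)),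
      integral_const_mul, hn_A]
  -- Numerator
  have hnum : (∫ z, (μ + σ * |z|) * Real.exp (-(lam * (μ + σ * |z|))) ∂(gaussianReal 0 1))
      = 2 * (c * (μ * (Real.exp (a ^ 2 / 2) * S)
          + σ * (Real.exp (a ^ 2 / 2) * (hnP a - a * S)))) := by
    rw [hn_gauss_integral]
    have h1 : ∀ z : ℝ, (μ + σ * |z|) * Real.exp (-(lam * (μ + σ * |z|))) * gaussianPDFReal 0 1 z
        = c * (μ * (Real.exp (-(a * |z|)) * hnP |z|)
            + σ * (|z| * (Real.exp (-(a * |z|)) * hnP |z|))) := by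
      intro z; rw [hn_pdf_eq, habs z, hsplit, hcdef]; ring
    simp only [h1]
    rw [integral_comp_abs (f := fun t => c * (μ * (Real.exp (-(a * t)) * hnP t)
        + σ * (t * (Real.exp (-(a * t)) * hnP t)))), integral_const_mul]
    rw [integral_add ((hn_integrableOn_tilt a).const_mul μ)
      ((hn_integrableOn_mul_tilt a).const_mul σ), integral_const_mul, integral_const_mul,
      hn_A, hn_B]
  rw [hnum, hden, hC, hn_measure_toReal]
  have hPa : Real.exp (-(σ * lam) ^ 2 / 2) = hnP a := by
    rw [hnP, ha]
  rw [hPa, ← hSdef]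
  have h2 : σ ^ 2 * lam = σ * a := by rw [ha]; ring
  rw [h2]
  have hE : Real.exp (a ^ 2 / 2) ≠ 0 := Real.exp_ne_zero _
  field_simp
  ring
end

section
/- Let Z be a standard Gaussian random variable, μ ∈ ℝ, σ > 0, λ ∈ ℝ, and let X = μ + σ|Z|. Define C = σ · φ(σλ) / P(Z ≥ σλ), where φ(a) = exp(-a²/2)/√(2π) is the standard Gaussian density. Then E[X² · exp(-λX)] / E[exp(-λX)] = σ⁴λ² - 2σ²λμ + μ² + σ² - C·(σ²λ - 2μ). -/
open MeasureTheory ProbabilityTheory Real Set Filter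
open scoped ENNReal NNReal

noncomputable def phi' (t : ℝ) : ℝ := Real.exp (-t ^ 2 / 2) / Real.sqrt (2 * π)

lemma phi'_eq_pdf (x : ℝ) : gaussianPDFReal 0 1 x = phi' x := by
  simp [gaussianPDFReal, phi', div_eq_mul_inv, mul_comm]

lemma continuous_phi' : Continuous phi' := by
  unfold phi'; fun_prop

lemma phi'_pos (t : ℝ) : 0 < phi' t := by
  have : (0:ℝ) < Real.sqrt (2 * π) := Real.sqrt_pos.mpr (by positivity)
  exact div_pos (Real.exp_pos _) this

lemma phi'_eq (t : ℝ) : phi' t = Real.exp (-(2⁻¹) * t ^ 2) * (Real.sqrt (2 * π))⁻¹ := by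
  unfold phi'; rw [div_eq_mul_inv]; ring_nf

lemma integral_gauss (f : ℝ → ℝ) :
    ∫ z, f z ∂(gaussianReal 0 1) = ∫ z, f z * phi' z := by
  rw [gaussianReal_of_var_ne_zero 0 one_ne_zero]
  have h : (gaussianPDF 0 1) = fun x => ((gaussianPDFReal 0 1 x).toNNReal : ℝ≥0∞) := by
    funext x; rfl
  rw [h, integral_withDensity_eq_integral_smul
    ((measurable_gaussianPDFReal 0 1).real_toNNReal)]
  congr 1; funext x
  rw [NNReal.smul_def, smul_eq_mul, Real.coe_toNNReal _ (gaussianPDFReal_nonneg 0 1 x),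
    phi'_eq_pdf, mul_comm]

lemma int_phi0 : MeasureTheory.Integrable phi' := by
  have := (integrable_exp_neg_mul_sq (b := 2⁻¹) (by norm_num)).mul_const
    ((Real.sqrt (2 * π))⁻¹)
  exact this.congr (by filter_upwards with t; rw [phi'_eq])

lemma int_phi1 : MeasureTheory.Integrable (fun t : ℝ => t ^ 1 * phi' t) := by
  have := (integrable_mul_exp_neg_mul_sq (b := 2⁻¹) (by norm_num)).mul_const
    ((Real.sqrt (2 * π))⁻¹)
  exact this.congr (by filter_upwards with t; rw [phi'_eq]; ring)

lemma int_phi2 : MeasureTheory.Integrable (fun t : ℝ => t ^ 2 * phi' t) := by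
  have base := ((integrable_exp_neg_mul_sq (b := 4⁻¹) (by norm_num)).mul_const
    ((Real.sqrt (2 * π))⁻¹)).const_mul 4
  refine base.mono' ?_ ?_
  · exact ((continuous_pow 2).mul continuous_phi').aestronglyMeasurable
  · filter_upwards with t
    have hs : (0:ℝ) < Real.sqrt (2 * π) := Real.sqrt_pos.mpr (by positivity)
    have h2 : t ^ 2 / 4 + 1 ≤ rexp (t ^ 2 / 4) := Real.add_one_le_exp _
    have h3 : rexp (-(2⁻¹) * t ^ 2) = rexp (-(4⁻¹) * t ^ 2) * (rexp (t^2/4))⁻¹ := by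
      rw [← Real.exp_neg, ← Real.exp_add]; ring_nf
    have hb : t ^ 2 * rexp (-(2⁻¹) * t ^ 2) ≤ 4 * rexp (-(4⁻¹) * t ^ 2) := by
      rw [h3]
      have hp := Real.exp_pos (t^2/4)
      have hq := Real.exp_pos (-(4⁻¹) * t^2)
      rw [show t ^ 2 * (rexp (-(4⁻¹) * t ^ 2) * (rexp (t ^ 2 / 4))⁻¹)
        = (t ^ 2 * (rexp (t ^ 2 / 4))⁻¹) * rexp (-(4⁻¹) * t ^ 2) by ring]
      have h4 : t ^ 2 * (rexp (t ^ 2 / 4))⁻¹ ≤ 4 := by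
        rw [mul_inv_le_iff₀ hp]
        nlinarith
      nlinarith [mul_le_mul_of_nonneg_right h4 hq.le]
    rw [Real.norm_eq_abs, abs_of_nonneg (mul_nonneg (by positivity) (phi'_pos t).le), phi'_eq]
    calc t ^ 2 * (rexp (-(2⁻¹) * t ^ 2) * (Real.sqrt (2 * π))⁻¹)
        = (t ^ 2 * rexp (-(2⁻¹) * t ^ 2)) * (Real.sqrt (2 * π))⁻¹ := by ring
      _ ≤ (4 * rexp (-(4⁻¹) * t ^ 2)) * (Real.sqrt (2 * π))⁻¹ := by
          exact mul_le_mul_of_nonneg_right hb (by positivity)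
      _ = 4 * (rexp (-(4⁻¹) * t ^ 2) * (Real.sqrt (2 * π))⁻¹) := by ring

-- even reduction
lemma even_reduce (F : ℝ → ℝ) :
    ∫ z : ℝ, F |z| * phi' z = 2 * ∫ x in Ioi (0:ℝ), F x * phi' x := by
  rw [← integral_comp_abs (f := fun x => F x * phi' x)]
  congr 1; funext z
  have : phi' |z| = phi' z := by unfold phi'; rw [sq_abs]
  rw [this]

-- tendsto lemmas
lemma tendsto_phi' : Tendsto phi' atTop (nhds 0) := by
  have h1 : Tendsto (fun t : ℝ => -t ^ 2 / 2) atTop atBot := by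
    apply Tendsto.atBot_div_const two_pos
    exact tendsto_neg_atBot_iff.mpr (tendsto_pow_atTop two_ne_zero)
  have h2 : Tendsto (fun t : ℝ => Real.exp (-t ^ 2 / 2)) atTop (nhds 0) :=
    Real.tendsto_exp_atBot.comp h1
  have := h2.div_const (Real.sqrt (2 * π))
  exact (by simpa only [zero_div] using this :
    Tendsto (fun t : ℝ => Real.exp (-t ^ 2 / 2) / Real.sqrt (2 * π)) atTop (nhds 0))

lemma tendsto_mul_phi' : Tendsto (fun t : ℝ => t * phi' t) atTop (nhds 0) := by
  have hup : Tendsto (fun t : ℝ => t ^ 1 * Real.exp (-t) * (Real.sqrt (2 * π))⁻¹)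
      atTop (nhds 0) := by
    simpa using (tendsto_pow_mul_exp_neg_atTop_nhds_zero 1).mul_const (Real.sqrt (2 * π))⁻¹
  refine tendsto_of_tendsto_of_tendsto_of_le_of_le' tendsto_const_nhds hup ?_ ?_
  · filter_upwards [eventually_ge_atTop (0:ℝ)] with t ht
    exact mul_nonneg ht (phi'_pos t).le
  · filter_upwards [eventually_ge_atTop (2:ℝ)] with t ht
    have h1 : t ≤ t ^ 2 / 2 := by nlinarith
    have h2 : Real.exp (-t ^ 2 / 2) ≤ Real.exp (-t) := by
      apply Real.exp_le_exp.mpr; linarith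
    unfold phi'
    rw [div_eq_mul_inv, ← mul_assoc]
    have ht0 : (0:ℝ) ≤ t := by linarith
    have := mul_le_mul_of_nonneg_left h2 ht0
    have hs : (0:ℝ) ≤ (Real.sqrt (2 * π))⁻¹ := by positivity
    calc t * Real.exp (-t ^ 2 / 2) * (Real.sqrt (2 * π))⁻¹
        ≤ t * Real.exp (-t) * (Real.sqrt (2 * π))⁻¹ :=
          mul_le_mul_of_nonneg_right this hs
      _ = t ^ 1 * Real.exp (-t) * (Real.sqrt (2 * π))⁻¹ := by ring

lemma hasDerivAt_phi' (t : ℝ) : HasDerivAt phi' (-(t * phi' t)) t := by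
  have h1 : HasDerivAt (fun u : ℝ => -u ^ 2 / 2) (-(2 * t ^ 1) / 2) t :=
    ((hasDerivAt_pow 2 t).neg).div_const 2
  have h3 := (h1.exp).div_const (Real.sqrt (2 * π))
  have he : rexp (-t ^ 2 / 2) * (-(2 * t ^ 1) / 2) / Real.sqrt (2 * π) = -(t * phi' t) := by
    unfold phi'; ring
  rw [he] at h3
  exact h3

lemma hasDerivAt_neg_phi' (t : ℝ) : HasDerivAt (fun u => -phi' u) (t * phi' t) t := by
  have h := (hasDerivAt_phi' t).neg
  rw [neg_neg] at h
  exact h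

lemma hasDerivAt_neg_mul_phi' (t : ℝ) :
    HasDerivAt (fun u => -(u * phi' u)) (t ^ 2 * phi' t - phi' t) t := by
  have h := ((hasDerivAt_id t).mul (hasDerivAt_phi' t)).neg
  have he : -(1 * phi' t + id t * -(t * phi' t)) = t ^ 2 * phi' t - phi' t := by
    simp only [id]; ring
  rw [he] at h
  exact h

lemma J1 (a : ℝ) : ∫ t in Ioi a, t * phi' t = phi' a := by
  have h := integral_Ioi_of_hasDerivAt_of_tendsto (f := fun u => -phi' u)
    (f' := fun t => t * phi' t) (a := a) (m := 0)
    (continuous_phi'.neg.continuousWithinAt)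
    (fun x _ => hasDerivAt_neg_phi' x)
    ((int_phi1.congr (by filter_upwards with t; rw [pow_one])).integrableOn)
    (by simpa using tendsto_phi'.neg)
  simpa using h

lemma J2 (a : ℝ) : ∫ t in Ioi a, t ^ 2 * phi' t = a * phi' a + ∫ t in Ioi a, phi' t := by
  have h := integral_Ioi_of_hasDerivAt_of_tendsto (f := fun u => -(u * phi' u))
    (f' := fun t => t ^ 2 * phi' t - phi' t) (a := a) (m := 0)
    ((continuous_id.mul continuous_phi').neg.continuousWithinAt)
    (fun x _ => hasDerivAt_neg_mul_phi' x)
    ((int_phi2.sub int_phi0).integrableOn)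
    (by simpa using tendsto_mul_phi'.neg)
  rw [integral_sub int_phi2.integrableOn int_phi0.integrableOn] at h
  have := sub_eq_iff_eq_add.mp h
  rw [this]; ring

lemma P_eq (a : ℝ) :
    ((gaussianReal 0 1) {z : ℝ | a ≤ z}).toReal = ∫ t in Ioi a, phi' t := by
  have hset : {z : ℝ | a ≤ z} = Ici a := rfl
  rw [hset, gaussianReal_apply_eq_integral 0 one_ne_zero,
    ENNReal.toReal_ofReal (setIntegral_nonneg measurableSet_Ici
      fun x _ => gaussianPDFReal_nonneg 0 1 x), ← integral_Ici_eq_integral_Ioi]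
  exact setIntegral_congr_fun measurableSet_Ici fun x _ => phi'_eq_pdf x

lemma P_pos (a : ℝ) : 0 < ∫ t in Ioi a, phi' t := by
  rw [setIntegral_pos_iff_support_of_nonneg_ae
    (by filter_upwards with t using (phi'_pos t).le) int_phi0.integrableOn]
  have : Function.support phi' = Set.univ := by
    ext t; simp [(phi'_pos t).ne']
  rw [this, Set.univ_inter]
  simp [Real.volume_Ioi]

lemma shift_Ioi (a : ℝ) (g : ℝ → ℝ) :
    ∫ x in Ioi (0:ℝ), g (x + a) = ∫ t in Ioi a, g t := by
  have h1 := (measurePreserving_add_right (volume : Measure ℝ) a).setIntegral_preimage_emb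
    (measurableEmbedding_addRight a) g (Ioi a)
  rwa [preimage_add_const_Ioi, sub_self] at h1

lemma tilt (a x : ℝ) :
    Real.exp (-(a * x)) * phi' x = Real.exp (a ^ 2 / 2) * phi' (x + a) := by
  have h : Real.exp (-(a * x)) * Real.exp (-x ^ 2 / 2)
      = Real.exp (a ^ 2 / 2) * Real.exp (-(x + a) ^ 2 / 2) := by
    rw [← Real.exp_add, ← Real.exp_add]; congr 1; ring
  unfold phi'
  rw [mul_div_assoc', h, mul_div_assoc]

lemma half_tilted (a c₀ c₁ c₂ : ℝ) :
    ∫ x in Ioi (0:ℝ), (c₀ + c₁ * x + c₂ * x ^ 2) * Real.exp (-(a * x)) * phi' x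
      = Real.exp (a ^ 2 / 2) *
        ((c₀ - c₁ * a + c₂ * a ^ 2 + c₂) * (∫ t in Ioi a, phi' t)
          + (c₁ - 2 * c₂ * a + c₂ * a) * phi' a) := by
  have step1 : ∫ x in Ioi (0:ℝ), (c₀ + c₁ * x + c₂ * x ^ 2) * Real.exp (-(a * x)) * phi' x
      = Real.exp (a ^ 2 / 2) * ∫ x in Ioi (0:ℝ),
        (c₀ + c₁ * x + c₂ * x ^ 2) * phi' (x + a) := by
    rw [← integral_const_mul]
    refine setIntegral_congr_fun measurableSet_Ioi fun x _ => ?_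
    rw [mul_assoc, tilt a x]; ring
  rw [step1]
  have step2 : ∫ x in Ioi (0:ℝ), (c₀ + c₁ * x + c₂ * x ^ 2) * phi' (x + a)
      = ∫ t in Ioi a, (c₀ + c₁ * (t - a) + c₂ * (t - a) ^ 2) * phi' t := by
    rw [← shift_Ioi a (fun t => (c₀ + c₁ * (t - a) + c₂ * (t - a) ^ 2) * phi' t)]
    refine setIntegral_congr_fun measurableSet_Ioi fun x _ => ?_
    simp only [add_sub_cancel_right]
  rw [step2]
  have step3 : ∫ t in Ioi a, (c₀ + c₁ * (t - a) + c₂ * (t - a) ^ 2) * phi' t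
      = (c₀ - c₁ * a + c₂ * a ^ 2) * (∫ t in Ioi a, phi' t)
        + ((c₁ - 2 * c₂ * a) * (∫ t in Ioi a, t * phi' t)
          + c₂ * (∫ t in Ioi a, t ^ 2 * phi' t)) := by
    have i1 : IntegrableOn (fun t : ℝ => (c₀ - c₁ * a + c₂ * a ^ 2) * phi' t) (Ioi a) := by
      exact int_phi0.integrableOn.const_mul _
    have i2 : IntegrableOn (fun t : ℝ => (c₁ - 2 * c₂ * a) * (t * phi' t)) (Ioi a) := by
      exact ((int_phi1.congr (by filter_upwards with t; rw [pow_one])).integrableOn).const_mul _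
    have i3 : IntegrableOn (fun t : ℝ => c₂ * (t ^ 2 * phi' t)) (Ioi a) := by
      exact int_phi2.integrableOn.const_mul _
    have i23 : IntegrableOn (fun t : ℝ => (c₁ - 2 * c₂ * a) * (t * phi' t)
        + c₂ * (t ^ 2 * phi' t)) (Ioi a) := by exact i2.add i3
    rw [← integral_const_mul, ← integral_const_mul, ← integral_const_mul,
      ← integral_add i2 i3, ← integral_add i1 i23]
    refine setIntegral_congr_fun measurableSet_Ioi fun t _ => ?_
    ring
  rw [step3, J1, J2]
  ring

/-- For `Z ~ N(0,1)`, `σ > 0`, `X = μ + σ|Z|`, and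
`C = σ·φ(σλ)/P(Z ≥ σλ)` with `φ(a) = exp(-a²/2)/√(2π)`:
`E[X²·exp(-λX)] / E[exp(-λX)] = σ⁴λ² - 2σ²λμ + μ² + σ² - C·(σ²λ - 2μ)`. -/
theorem halfNormal_tilted_second_moment (μ σ lam C : ℝ) (hσ : 0 < σ)
    (hC : C = σ * (Real.exp (-(σ * lam) ^ 2 / 2) / Real.sqrt (2 * π)) /
      ((gaussianReal 0 1) {z : ℝ | σ * lam ≤ z}).toReal) :
    (∫ z, (μ + σ * |z|) ^ 2 * Real.exp (-(lam * (μ + σ * |z|))) ∂(gaussianReal 0 1)) /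
      (∫ z, Real.exp (-(lam * (μ + σ * |z|))) ∂(gaussianReal 0 1)) =
      σ ^ 4 * lam ^ 2 - 2 * σ ^ 2 * lam * μ + μ ^ 2 + σ ^ 2 - C * (σ ^ 2 * lam - 2 * μ) := by
  set a : ℝ := σ * lam with ha
  set P : ℝ := ∫ t in Ioi a, phi' t with hPdef
  have hPpos : 0 < P := P_pos a
  have hC' : C = σ * phi' a / P := by rw [hC, P_eq a]; rfl
  have hptN : ∀ x : ℝ, (μ + σ * x) ^ 2 * Real.exp (-(lam * (μ + σ * x))) * phi' x
      = Real.exp (-(lam * μ)) *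
        ((μ ^ 2 + (2 * μ * σ) * x + σ ^ 2 * x ^ 2) * Real.exp (-(a * x)) * phi' x) := by
    intro x
    rw [show -(lam * (μ + σ * x)) = -(lam * μ) + -(a * x) by rw [ha]; ring, Real.exp_add]
    ring
  have hptD : ∀ x : ℝ, Real.exp (-(lam * (μ + σ * x))) * phi' x
      = Real.exp (-(lam * μ)) *
        ((1 + 0 * x + 0 * x ^ 2) * Real.exp (-(a * x)) * phi' x) := by
    intro x
    rw [show -(lam * (μ + σ * x)) = -(lam * μ) + -(a * x) by rw [ha]; ring, Real.exp_add]
    ring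
  have hN : (∫ z, (μ + σ * |z|) ^ 2 * Real.exp (-(lam * (μ + σ * |z|))) ∂(gaussianReal 0 1))
      = 2 * (Real.exp (-(lam * μ)) * (Real.exp (a ^ 2 / 2) *
          ((μ ^ 2 - 2 * μ * σ * a + σ ^ 2 * a ^ 2 + σ ^ 2) * P
            + (2 * μ * σ - 2 * σ ^ 2 * a + σ ^ 2 * a) * phi' a))) := by
    rw [integral_gauss, even_reduce (fun x => (μ + σ * x) ^ 2 *
      Real.exp (-(lam * (μ + σ * x))))]
    congr 1
    rw [show (∫ x in Ioi (0:ℝ), (μ + σ * x) ^ 2 * Real.exp (-(lam * (μ + σ * x))) * phi' x)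
        = ∫ x in Ioi (0:ℝ), Real.exp (-(lam * μ)) *
          ((μ ^ 2 + (2 * μ * σ) * x + σ ^ 2 * x ^ 2) * Real.exp (-(a * x)) * phi' x)
      from setIntegral_congr_fun measurableSet_Ioi fun x _ => hptN x,
      integral_const_mul, half_tilted]
  have hD : (∫ z, Real.exp (-(lam * (μ + σ * |z|))) ∂(gaussianReal 0 1))
      = 2 * (Real.exp (-(lam * μ)) * (Real.exp (a ^ 2 / 2) * P)) := by
    rw [integral_gauss, even_reduce (fun x => Real.exp (-(lam * (μ + σ * x))))]
    congr 1
    rw [show (∫ x in Ioi (0:ℝ), Real.exp (-(lam * (μ + σ * x))) * phi' x)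
        = ∫ x in Ioi (0:ℝ), Real.exp (-(lam * μ)) *
          ((1 + 0 * x + 0 * x ^ 2) * Real.exp (-(a * x)) * phi' x)
      from setIntegral_congr_fun measurableSet_Ioi fun x _ => hptD x,
      integral_const_mul, half_tilted]
    ring
  rw [hN, hD, hC', ha]
  have h1 : Real.exp (-(lam * μ)) ≠ 0 := Real.exp_ne_zero _
  have h2 : Real.exp ((σ * lam) ^ 2 / 2) ≠ 0 := Real.exp_ne_zero _
  field_simp
  ring
end

section
/- Let Z be a standard Gaussian random variable, μ ∈ ℝ, σ > 0, λ ∈ ℝ, and let X = μ + σ|Z|, with m := E[X] = μ + σ√(2/π). Define C = σ · φ(σλ) / P(Z ≥ σλ), where φ(a) = exp(-a²/2)/√(2π) is the standard Gaussian density. Then the exponentially tilted mean squared error about m satisfies E[(X - m)² e^{-λX}] / E[e^{-λX}] = (σ²λ - C)·(σ²λ + 2σ√(2/π)) + σ²·(2/π + 1). -/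
open MeasureTheory ProbabilityTheory Real Filter Set Topology Function
open scoped NNReal ENNReal

namespace HalfNormalAux

noncomputable def G (t z : ℝ) : ℝ := rexp (-(t * z) - z ^ 2 / 2)

lemma exp_shift (t z : ℝ) : rexp (t ^ 2 / 2) * rexp (-(1/2 : ℝ) * (z + t) ^ 2) = G t z := by
  rw [G, ← Real.exp_add]; congr 1; ring

lemma integrable_base : ∀ j : ℕ, j ≤ 2 →
    Integrable (fun u : ℝ => u ^ j * rexp (-(1/2 : ℝ) * u ^ 2)) := by
  intro j hj
  interval_cases j
  · simpa using integrable_exp_neg_mul_sq (by norm_num : (0:ℝ) < 1/2)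
  · simpa using integrable_mul_exp_neg_mul_sq (by norm_num : (0:ℝ) < 1/2)
  · have h := integrable_rpow_mul_exp_neg_mul_sq (by norm_num : (0:ℝ) < 1/2)
      (by norm_num : (-1:ℝ) < 2)
    have h2 : ∀ u : ℝ, u ^ (2:ℝ) = u ^ (2:ℕ) := fun u => by
      rw [show (2:ℝ) = ((2:ℕ):ℝ) by norm_num, Real.rpow_natCast]
    refine h.congr (Filter.Eventually.of_forall fun u => ?_)
    show u ^ (2:ℝ) * rexp (-(1/2:ℝ) * u ^ 2) = u ^ (2:ℕ) * rexp (-(1/2:ℝ) * u ^ 2)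
    rw [h2]

lemma integrable_pow_G (t : ℝ) (k : ℕ) (hk : k ≤ 2) :
    Integrable (fun z : ℝ => z ^ k * G t z) := by
  have hf : Integrable (fun u : ℝ => (u - t) ^ k * rexp (-(1/2:ℝ) * u ^ 2)) := by
    interval_cases k
    · exact (integrable_base 0 (by norm_num)).congr
        (Filter.Eventually.of_forall fun u => by simp only [Pi.add_apply, Pi.sub_apply]; ring)
    · exact ((integrable_base 1 (by norm_num)).sub
        ((integrable_base 0 (by norm_num)).const_mul t)).congr
        (Filter.Eventually.of_forall fun u => by simp only [Pi.add_apply, Pi.sub_apply]; ring)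
    · exact (((integrable_base 2 (by norm_num)).sub
        ((integrable_base 1 (by norm_num)).const_mul (2*t))).add
        ((integrable_base 0 (by norm_num)).const_mul (t^2))).congr
        (Filter.Eventually.of_forall fun u => by simp only [Pi.add_apply, Pi.sub_apply]; ring)
  have hs := (hf.comp_add_right t).const_mul (rexp (t ^ 2 / 2))
  refine hs.congr (Filter.Eventually.of_forall fun z => ?_)
  have hz : z + t - t = z := by ring
  simp only [hz, mul_left_comm, exp_shift]

lemma tendsto_pow_G (t : ℝ) (k : ℕ) :
    Tendsto (fun z => z ^ k * G t z) atTop (𝓝 0) := by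
  apply squeeze_zero_norm' ?_ (tendsto_pow_mul_exp_neg_atTop_nhds_zero k)
  filter_upwards [eventually_ge_atTop (max 1 (2*(1 - t)))] with z hz
  have hz1 : (1:ℝ) ≤ z := le_trans (le_max_left _ _) hz
  have hz2 : 2*(1-t) ≤ z := le_trans (le_max_right _ _) hz
  have h0 : 0 ≤ z := by linarith
  rw [Real.norm_eq_abs, abs_mul, abs_pow, abs_of_nonneg h0, G,
    abs_of_nonneg (Real.exp_pos _).le]
  refine mul_le_mul_of_nonneg_left (Real.exp_le_exp.2 ?_) (pow_nonneg h0 k)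
  nlinarith [mul_le_mul_of_nonneg_right hz2 h0]

lemma deriv_aux (t z : ℝ) : HasDerivAt (fun z : ℝ => -(t * z) - z ^ 2 / 2) (-t - z) z := by
  have h1 : HasDerivAt (fun z : ℝ => t * z) t z := by
    simpa using (hasDerivAt_id z).const_mul t
  have h2 : HasDerivAt (fun z : ℝ => z ^ 2 / 2) z z := by
    simpa using (hasDerivAt_pow 2 z).div_const 2
  exact h1.neg.sub h2

lemma rel1 (t : ℝ) : ∫ z in Ioi (0:ℝ), (t + z) * G t z = 1 := by
  have hder : ∀ x ∈ Ici (0:ℝ), HasDerivAt (fun z => -G t z) ((t + x) * G t x) x := by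
    intro x _
    have h : HasDerivAt (fun z => -G t z) (-(rexp (-(t * x) - x ^ 2 / 2) * (-t - x))) x :=
      ((deriv_aux t x).exp).neg
    convert h using 1
    rw [G]; ring
  have hint : IntegrableOn (fun z => (t + z) * G t z) (Ioi (0:ℝ)) := by
    refine (((integrable_pow_G t 1 one_le_two).add
      ((integrable_pow_G t 0 (by norm_num)).const_mul t)).congr
      (Filter.Eventually.of_forall fun z => by simp only [Pi.add_apply, Pi.sub_apply]; ring)).integrableOn
  have hlim : Tendsto (fun z => -G t z) atTop (𝓝 0) := by
    have := (tendsto_pow_G t 0).neg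
    simpa using this
  have h := integral_Ioi_of_hasDerivAt_of_tendsto' hder hint hlim
  rw [h]
  simp [G]

lemma rel2 (t : ℝ) : ∫ z in Ioi (0:ℝ), (z * (t + z) - 1) * G t z = 0 := by
  have hder : ∀ x ∈ Ici (0:ℝ), HasDerivAt (fun z => -(z * G t z)) ((x * (t + x) - 1) * G t x) x := by
    intro x _
    have hG : HasDerivAt (fun z => G t z) ((-t - x) * G t x) x := by
      have h : HasDerivAt (fun z => G t z) (rexp (-(t * x) - x ^ 2 / 2) * (-t - x)) x :=
        (deriv_aux t x).exp
      convert h using 1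
      rw [G]; ring
    have h : HasDerivAt (fun z => -(z * G t z)) (-(1 * G t x + id x * ((-t - x) * G t x))) x :=
      ((hasDerivAt_id x).mul hG).neg
    convert h using 1
    rw [G]; simp; ring
  have hint : IntegrableOn (fun z => (z * (t + z) - 1) * G t z) (Ioi (0:ℝ)) := by
    refine ((((integrable_pow_G t 2 le_rfl).add
      ((integrable_pow_G t 1 one_le_two).const_mul t)).sub
      (integrable_pow_G t 0 (by norm_num))).congr
      (Filter.Eventually.of_forall fun z => by simp only [Pi.add_apply, Pi.sub_apply]; ring)).integrableOn
  have hlim : Tendsto (fun z => -(z * G t z)) atTop (𝓝 0) := by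
    have := (tendsto_pow_G t 1).neg
    simpa using this
  have h := integral_Ioi_of_hasDerivAt_of_tendsto' hder hint hlim
  rw [h]
  simp

lemma I0_eq (t : ℝ) : ∫ z in Ioi (0:ℝ), G t z
    = rexp (t ^ 2 / 2) * ∫ u in Ioi t, rexp (-(1/2:ℝ) * u ^ 2) := by
  have hmp : MeasurePreserving (fun z : ℝ => z + t) volume volume :=
    measurePreserving_add_right volume t
  have hemb : MeasurableEmbedding (fun z : ℝ => z + t) :=
    (Homeomorph.addRight t).measurableEmbedding
  have hpre : (fun z : ℝ => z + t) ⁻¹' (Ioi t) = Ioi 0 := by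
    ext z; simp
  have h := hmp.setIntegral_preimage_emb hemb (fun u => rexp (-(1/2:ℝ) * u ^ 2)) (Ioi t)
  calc ∫ z in Ioi (0:ℝ), G t z
      = ∫ z in Ioi (0:ℝ), rexp (t ^ 2 / 2) * rexp (-(1/2:ℝ) * (z + t) ^ 2) :=
        setIntegral_congr_fun measurableSet_Ioi fun z _ => (exp_shift t z).symm
    _ = rexp (t ^ 2 / 2) * ∫ z in Ioi (0:ℝ), rexp (-(1/2:ℝ) * (z + t) ^ 2) :=
        integral_const_mul _ _
    _ = rexp (t ^ 2 / 2) * ∫ u in Ioi t, rexp (-(1/2:ℝ) * u ^ 2) := by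
        rw [← h, hpre]

lemma pdf_eq (z : ℝ) : gaussianPDFReal 0 1 z
    = (Real.sqrt (2 * π))⁻¹ * rexp (-(1/2:ℝ) * z ^ 2) := by
  simp only [gaussianPDFReal, NNReal.coe_one, mul_one, sub_zero]
  congr 1
  ring

lemma Q_eq (t : ℝ) : ((gaussianReal 0 1) {z : ℝ | t ≤ z}).toReal
    = (Real.sqrt (2 * π))⁻¹ * ∫ u in Ioi t, rexp (-(1/2:ℝ) * u ^ 2) := by
  have hset : {z : ℝ | t ≤ z} = Ici t := rfl
  rw [hset, gaussianReal_apply_eq_integral 0 one_ne_zero (Ici t),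
    ENNReal.toReal_ofReal
      (setIntegral_nonneg measurableSet_Ici fun x _ => gaussianPDFReal_nonneg 0 1 x),
    integral_Ici_eq_integral_Ioi, ← integral_const_mul]
  exact setIntegral_congr_fun measurableSet_Ioi fun u _ => pdf_eq u

lemma J_pos (t : ℝ) : 0 < ∫ u in Ioi t, rexp (-(1/2:ℝ) * u ^ 2) := by
  rw [setIntegral_pos_iff_support_of_nonneg_ae
    (Filter.Eventually.of_forall fun u => (Real.exp_pos _).le)
    ((integrable_base 0 (by norm_num)).congr
      (Filter.Eventually.of_forall fun u => by simp only [Pi.add_apply, Pi.sub_apply]; ring)).integrableOn]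
  have hsupp : Function.support (fun u : ℝ => rexp (-(1/2:ℝ) * u ^ 2)) = univ := by
    ext u; simp [Real.exp_ne_zero]
  rw [hsupp, univ_inter, Real.volume_Ioi]
  simp

lemma gauss_int (g : ℝ → ℝ) : ∫ z, g z ∂(gaussianReal 0 1)
    = ∫ z, gaussianPDFReal 0 1 z * g z := by
  rw [gaussianReal_of_var_ne_zero 0 one_ne_zero]
  have heq : gaussianPDF 0 1 = fun x => ((Real.toNNReal (gaussianPDFReal 0 1 x) : ℝ≥0) : ℝ≥0∞) :=
    rfl
  rw [heq, integral_withDensity_eq_integral_smul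
    ((measurable_gaussianPDFReal 0 1).real_toNNReal) g]
  refine integral_congr_ae (Filter.Eventually.of_forall fun z => ?_)
  show (gaussianPDFReal 0 1 z).toNNReal • g z = gaussianPDFReal 0 1 z * g z
  rw [NNReal.smul_def, Real.coe_toNNReal _ (gaussianPDFReal_nonneg 0 1 z), smul_eq_mul]

end HalfNormalAux

open HalfNormalAux

/-- For `Z ~ N(0,1)`, `σ > 0`, `X = μ + σ|Z|`, `m = μ + σ√(2/π)`, and
`C = σ·φ(σλ)/P(Z ≥ σλ)` with `φ(a) = exp(-a²/2)/√(2π)`: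
`E[(X-m)²e^{-λX}]/E[e^{-λX}] = (σ²λ - C)(σ²λ + 2σ√(2/π)) + σ²(2/π + 1)`. -/
theorem halfNormal_tilted_mse (μ σ lam C m : ℝ) (hσ : 0 < σ)
    (hm : m = μ + σ * Real.sqrt (2 / π))
    (hC : C = σ * (Real.exp (-(σ * lam) ^ 2 / 2) / Real.sqrt (2 * π)) /
      ((gaussianReal 0 1) {z : ℝ | σ * lam ≤ z}).toReal) :
    (∫ z, ((μ + σ * |z|) - m) ^ 2 * Real.exp (-(lam * (μ + σ * |z|))) ∂(gaussianReal 0 1)) /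
      (∫ z, Real.exp (-(lam * (μ + σ * |z|))) ∂(gaussianReal 0 1)) =
      (σ ^ 2 * lam - C) * (σ ^ 2 * lam + 2 * σ * Real.sqrt (2 / π)) +
        σ ^ 2 * (2 / π + 1) := by
  subst hm
  set a : ℝ := Real.sqrt (2 / π) with ha
  set t : ℝ := σ * lam with ht
  have hπ : (0:ℝ) < π := Real.pi_pos
  have ha2 : a ^ 2 = 2 / π := Real.sq_sqrt (by positivity)
  set I0 : ℝ := ∫ z in Ioi (0:ℝ), G t z with hI0def
  set I1 : ℝ := ∫ z in Ioi (0:ℝ), z * G t z with hI1def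
  set I2 : ℝ := ∫ z in Ioi (0:ℝ), z ^ 2 * G t z with hI2def
  -- relations
  have hint0 : IntegrableOn (fun z : ℝ => G t z) (Ioi 0) := by
    have := integrable_pow_G t 0 (by norm_num)
    exact (this.congr (Filter.Eventually.of_forall fun z => by simp only [Pi.add_apply, Pi.sub_apply]; ring)).integrableOn
  have hint1 : IntegrableOn (fun z : ℝ => z * G t z) (Ioi 0) := by
    have := integrable_pow_G t 1 one_le_two
    exact (this.congr (Filter.Eventually.of_forall fun z => by simp only [Pi.add_apply, Pi.sub_apply]; ring)).integrableOn
  have hint2 : IntegrableOn (fun z : ℝ => z ^ 2 * G t z) (Ioi 0) := by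
    exact (integrable_pow_G t 2 le_rfl).integrableOn
  have hrel1 : t * I0 + I1 = 1 := by
    have h := rel1 t
    rw [show (fun z : ℝ => (t + z) * G t z) = fun z : ℝ => t * G t z + z * G t z from
      funext fun z => by ring] at h
    rw [integral_add (hint0.const_mul t) hint1, integral_const_mul] at h
    simpa [hI0def, hI1def] using h
  have hrel2 : t * I1 + I2 - I0 = 0 := by
    have h := rel2 t
    rw [show (fun z : ℝ => (z * (t + z) - 1) * G t z)
        = fun z : ℝ => (t * (z * G t z) + z ^ 2 * G t z) - G t z from
      funext fun z => by ring] at h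
    have f1 : Integrable (fun z : ℝ => t * (z * G t z)) (volume.restrict (Ioi 0)) :=
      hint1.const_mul t
    have f12 : Integrable (fun z : ℝ => t * (z * G t z) + z ^ 2 * G t z)
        (volume.restrict (Ioi 0)) := f1.add hint2
    rw [integral_sub f12 hint0, integral_add f1 hint2, integral_const_mul] at h
    simpa [hI0def, hI1def, hI2def] using h
  have hJpos := J_pos t
  have hI0pos : 0 < I0 := by
    rw [hI0def, I0_eq]
    positivity
  have hsq : (0:ℝ) < Real.sqrt (2 * π) := Real.sqrt_pos.2 (by positivity)
  -- value of C
  have hCval : C = σ / I0 := by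
    have hexp : rexp (-t ^ 2 / 2) = (rexp (t ^ 2 / 2))⁻¹ := by
      rw [← Real.exp_neg]; congr 1; ring
    rw [hC, Q_eq, hI0def, I0_eq, hexp]
    set S : ℝ := Real.sqrt (2 * π) with hS
    set J : ℝ := ∫ u in Ioi t, rexp (-(1/2:ℝ) * u ^ 2) with hJ
    set E : ℝ := rexp (t ^ 2 / 2) with hE
    have hSne : S ≠ 0 := hsq.ne'
    have hJne : J ≠ 0 := hJpos.ne'
    have hEne : E ≠ 0 := (Real.exp_pos _).ne'
    field_simp
  -- the two gaussian integrals
  set c : ℝ := (Real.sqrt (2 * π))⁻¹ * rexp (-(lam * μ)) * 2 with hc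
  have hcpos : 0 < c := by positivity
  have hE : ∀ z : ℝ, rexp (-(1/2:ℝ) * z ^ 2) * rexp (-(lam * (μ + σ * |z|)))
      = rexp (-(lam * μ)) * rexp (-(t * |z|) - |z| ^ 2 / 2) := by
    intro z
    rw [← Real.exp_add, ← Real.exp_add]
    congr 1
    rw [← sq_abs z, ht]
    ring
  have hD : (∫ z, rexp (-(lam * (μ + σ * |z|))) ∂(gaussianReal 0 1)) = c * I0 := by
    rw [gauss_int]
    have hpt : ∀ z : ℝ, gaussianPDFReal 0 1 z * rexp (-(lam * (μ + σ * |z|)))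
        = (Real.sqrt (2 * π))⁻¹ * rexp (-(lam * μ)) * ((fun x => G t x) |z|) := by
      intro z
      show gaussianPDFReal 0 1 z * rexp (-(lam * (μ + σ * |z|)))
        = (Real.sqrt (2 * π))⁻¹ * rexp (-(lam * μ)) * G t |z|
      rw [pdf_eq, G]
      linear_combination (Real.sqrt (2 * π))⁻¹ * hE z
    rw [integral_congr_ae (Filter.Eventually.of_forall hpt), integral_const_mul,
      integral_comp_abs (f := fun x => G t x)]
    rw [hc, hI0def]
    ring
  have hN : (∫ z, ((μ + σ * |z|) - (μ + σ * a)) ^ 2 * rexp (-(lam * (μ + σ * |z|)))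
        ∂(gaussianReal 0 1))
      = c * (σ ^ 2 * I2 - 2 * σ ^ 2 * a * I1 + σ ^ 2 * a ^ 2 * I0) := by
    rw [gauss_int]
    have hpt : ∀ z : ℝ, gaussianPDFReal 0 1 z
          * (((μ + σ * |z|) - (μ + σ * a)) ^ 2 * rexp (-(lam * (μ + σ * |z|))))
        = (Real.sqrt (2 * π))⁻¹ * rexp (-(lam * μ))
          * ((fun x => (σ * x - σ * a) ^ 2 * G t x) |z|) := by
      intro z
      show gaussianPDFReal 0 1 z
          * (((μ + σ * |z|) - (μ + σ * a)) ^ 2 * rexp (-(lam * (μ + σ * |z|))))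
        = (Real.sqrt (2 * π))⁻¹ * rexp (-(lam * μ)) * ((σ * |z| - σ * a) ^ 2 * G t |z|)
      rw [pdf_eq, G]
      linear_combination (Real.sqrt (2 * π))⁻¹ * (σ * |z| - σ * a) ^ 2 * hE z
    rw [integral_congr_ae (Filter.Eventually.of_forall hpt), integral_const_mul,
      integral_comp_abs (f := fun x => (σ * x - σ * a) ^ 2 * G t x)]
    have hexpand : ∫ x in Ioi (0:ℝ), (σ * x - σ * a) ^ 2 * G t x
        = σ ^ 2 * I2 - 2 * σ ^ 2 * a * I1 + σ ^ 2 * a ^ 2 * I0 := by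
      rw [show (fun x : ℝ => (σ * x - σ * a) ^ 2 * G t x)
          = fun x : ℝ => (σ ^ 2 * (x ^ 2 * G t x) - 2 * σ ^ 2 * a * (x * G t x))
            + σ ^ 2 * a ^ 2 * G t x from funext fun x => by ring]
      have e2 : Integrable (fun z : ℝ => σ ^ 2 * (z ^ 2 * G t z)) (volume.restrict (Ioi 0)) :=
        hint2.const_mul _
      have e1 : Integrable (fun z : ℝ => 2 * σ ^ 2 * a * (z * G t z))
          (volume.restrict (Ioi 0)) := hint1.const_mul _
      have e0 : Integrable (fun z : ℝ => σ ^ 2 * a ^ 2 * G t z) (volume.restrict (Ioi 0)) :=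
        hint0.const_mul _
      have e21 : Integrable
          (fun z : ℝ => σ ^ 2 * (z ^ 2 * G t z) - 2 * σ ^ 2 * a * (z * G t z))
          (volume.restrict (Ioi 0)) := e2.sub e1
      rw [integral_add e21 e0, integral_sub e2 e1,
        integral_const_mul, integral_const_mul, integral_const_mul]
    rw [hexpand, hc]
    ring
  rw [hD, hN, mul_div_mul_left _ _ hcpos.ne']
  -- final algebra
  have hI1v : I1 = 1 - t * I0 := by linarith
  have hI2v : I2 = I0 - t * I1 := by linarith
  rw [hI2v, hI1v, hCval, show σ ^ 2 * lam = σ * t from by rw [ht]; ring,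
    show (2:ℝ) / π = a ^ 2 from ha2.symm]
  field_simp
  ring
end
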